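/- Let ψ : ℝⁿ ⇉ ℝⁿ satisfy the (Γ₁)-condition and V : ℝⁿ → ℝⁿ be L-} Lipschitz continuous and η-strongly monotone. Let μ > 0 and ρ > 0 satisfy ‖P_{ψ(r)}(y) − P_{ψ(s)}(y)‖ ≤ ρ‖r − s‖ for all y, r, s ∈ ℝⁿ, assume θ := η − ρ − 1/2 − L²/2 − μ²/2 + μη > 0 and √(L² − 2ημ + μ²) + ρ < μ, and set θ₁ := θ/(2L + ρ + μ)². Suppose the constants σ, τ satisfy 0 < σ < 1 and 0 < τ < θ₁ · min{(1 − σ)/4, σ²/(4 − σ)}. Let x₀, x₁ ∈ ℝⁿ and define the iteration x_{n+1} = x_n + (1 − σ)(x_n − x_{n−1}) + τ(P_{ψ(x_n)}(V(x_n) − μ x_n) − V(x_n)) for n ≥ 1. Then the sequence {x_n} converges linearly to the unique solution x* of the inverse quasi-variational inequality problem; more precisely, there exist constants ε > 1 and M > 0 such that ‖x_n − x*‖² ≤ M (n + 1) ε^{−n} for all n ≥ 1. -/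

import Mathlib

/-!
The residual `g y = P_{ψ y}(V y - μ y) - V y` vanishes at the solution `x*`. Strong monotonicity
of `V`, the `ρ`-Lipschitz dependence of the projection on the set and nonexpansiveness of
`P_{ψ x*}` give `⟪g y, y - x*⟫ ≤ -θ ‖y - x*‖²` and `‖g y‖ ≤ (2L + ρ + μ) ‖y - x*‖`. From these two
estimates and the step-size condition, the Lyapunov function
`σ ‖x_n - x*‖² - σ(1-σ) ‖x_{n-1} - x*‖² + 4(1-σ) ‖x_n - x_{n-1}‖²` contracts by the factor
`1 - τθ` at every step. Dropping its last term gives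
`‖x_n - x*‖² ≤ (1-σ) ‖x_{n-1} - x*‖² + C (1-τθ)^n`, and unrolling this recursion yields the bound
`M (n+1) r^n` with `r = max (1-σ) (1-τθ) < 1`.
-/

open scoped RealInnerProductSpace

-- The `else` branch is a junk value; for nonempty closed convex `C` a nearest point exists.
open Classical in
noncomputable def metricProj {d : ℕ} (C : Set (EuclideanSpace ℝ (Fin d)))
    (x : EuclideanSpace ℝ (Fin d)) : EuclideanSpace ℝ (Fin d) :=
  if h : ∃ y, y ∈ C ∧ ∀ z ∈ C, ‖x - y‖ ≤ ‖x - z‖ then h.choose else x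

section Projection

variable {d : ℕ} {C : Set (EuclideanSpace ℝ (Fin d))}

theorem metricProj_mem_and_inner_le (hne : C.Nonempty) (hcl : IsClosed C) (hcv : Convex ℝ C)
    (x : EuclideanSpace ℝ (Fin d)) :
    metricProj C x ∈ C ∧ ∀ z ∈ C, ⟪x - metricProj C x, z - metricProj C x⟫ ≤ 0 := by
  obtain ⟨v, hvC, hv⟩ := exists_norm_eq_iInf_of_complete_convex hne hcl.isComplete hcv x
  have hbdd : BddBelow (Set.range fun w : C => ‖x - w‖) :=
    ⟨0, by rintro _ ⟨w, rfl⟩; positivity⟩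
  have hex : ∃ y, y ∈ C ∧ ∀ z ∈ C, ‖x - y‖ ≤ ‖x - z‖ :=
    ⟨v, hvC, fun z hz => hv ▸ ciInf_le hbdd ⟨z, hz⟩⟩
  obtain ⟨hmem, hmin⟩ := hex.choose_spec
  have : Nonempty C := ⟨⟨v, hvC⟩⟩
  rw [metricProj, dif_pos hex]
  refine ⟨hmem, (norm_eq_iInf_iff_real_inner_le_zero hcv hmem).mp ?_⟩
  exact le_antisymm (le_ciInf fun w => hmin w w.2) (ciInf_le hbdd ⟨_, hmem⟩)

theorem metricProj_eq_of_inner_le (hne : C.Nonempty) (hcl : IsClosed C) (hcv : Convex ℝ C)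
    {x v : EuclideanSpace ℝ (Fin d)} (hvC : v ∈ C) (hv : ∀ z ∈ C, ⟪x - v, z - v⟫ ≤ 0) :
    metricProj C x = v := by
  obtain ⟨hpC, hp⟩ := metricProj_mem_and_inner_le hne hcl hcv x
  set p := metricProj C x
  have hsum : ⟪v - p, v - p⟫ = ⟪x - p, v - p⟫ + ⟪x - v, p - v⟫ := by
    rw [← neg_sub v p, inner_neg_right, ← sub_eq_add_neg, ← inner_sub_left,
      sub_sub_sub_cancel_left]
  have hvp : v - p = 0 := inner_self_eq_zero.mp <|
    le_antisymm (hsum ▸ add_nonpos (hp v hvC) (hv p hpC)) real_inner_self_nonneg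
  exact (sub_eq_zero.mp hvp).symm

theorem norm_metricProj_sub_metricProj_le (hne : C.Nonempty) (hcl : IsClosed C)
    (hcv : Convex ℝ C) (a b : EuclideanSpace ℝ (Fin d)) :
    ‖metricProj C a - metricProj C b‖ ≤ ‖a - b‖ := by
  obtain ⟨hpC, hp⟩ := metricProj_mem_and_inner_le hne hcl hcv a
  obtain ⟨hqC, hq⟩ := metricProj_mem_and_inner_le hne hcl hcv b
  set p := metricProj C a
  set q := metricProj C b
  have hsum : ⟪a - b, p - q⟫ - ‖p - q‖ ^ 2 = -⟪a - p, q - p⟫ - ⟪b - q, p - q⟫ := by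
    rw [← real_inner_self_eq_norm_sq, ← inner_sub_left, ← neg_sub p q, inner_neg_right,
      neg_neg, ← inner_sub_left]
    congr 1
    abel
  have hcs := real_inner_le_norm (a - b) (p - q)
  nlinarith [hp q hqC, hq p hpC, norm_nonneg (p - q), norm_nonneg (a - b)]

end Projection

section Operator

variable {H : Type*} [NormedAddCommGroup H] [InnerProductSpace ℝ H] {V : H → H} {L η : ℝ}

theorem norm_sub_smul_sub_sq_le (hL : ∀ y z, ‖V y - V z‖ ≤ L * ‖y - z‖)
    (hη : ∀ y z, η * ‖y - z‖ ^ 2 ≤ ⟪V y - V z, y - z⟫) {μ : ℝ} (hμ : 0 ≤ μ) (y z : H) :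
    ‖(V y - μ • y) - (V z - μ • z)‖ ^ 2 ≤ (L ^ 2 - 2 * η * μ + μ ^ 2) * ‖y - z‖ ^ 2 := by
  have hsplit : (V y - μ • y) - (V z - μ • z) = (V y - V z) - μ • (y - z) := by
    rw [smul_sub]; abel
  rw [hsplit, norm_sub_sq_real, real_inner_smul_right, norm_smul, Real.norm_of_nonneg hμ]
  have hLsq := mul_self_le_mul_self (norm_nonneg _) (hL y z)
  nlinarith [mul_le_mul_of_nonneg_left (hη y z) hμ]

theorem nonneg_and_le_of_lipschitz_of_stronglyMonotone [Nontrivial H]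
    (hL : ∀ y z, ‖V y - V z‖ ≤ L * ‖y - z‖)
    (hη : ∀ y z, η * ‖y - z‖ ^ 2 ≤ ⟪V y - V z, y - z⟫) : 0 ≤ L ∧ η ≤ L := by
  obtain ⟨y, hy⟩ := exists_ne (0 : H)
  have hpos : 0 < ‖y - 0‖ := by simpa using hy
  have hL0 : 0 ≤ L := nonneg_of_mul_nonneg_left ((norm_nonneg _).trans (hL y 0)) hpos
  refine ⟨hL0, le_of_mul_le_mul_right ?_ (pow_pos hpos 2)⟩
  calc η * ‖y - 0‖ ^ 2 ≤ ⟪V y - V 0, y - 0⟫ := hη y 0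
    _ ≤ ‖V y - V 0‖ * ‖y - 0‖ := real_inner_le_norm _ _
    _ ≤ L * ‖y - 0‖ * ‖y - 0‖ := mul_le_mul_of_nonneg_right (hL y 0) hpos.le
    _ = L * ‖y - 0‖ ^ 2 := by ring

end Operator

section Residual

variable {d : ℕ} {ψ : EuclideanSpace ℝ (Fin d) → Set (EuclideanSpace ℝ (Fin d))}
  {V : EuclideanSpace ℝ (Fin d) → EuclideanSpace ℝ (Fin d)} {L η μ ρ : ℝ}
  {xs : EuclideanSpace ℝ (Fin d)}

noncomputable def projResidual (ψ : EuclideanSpace ℝ (Fin d) → Set (EuclideanSpace ℝ (Fin d)))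
    (V : EuclideanSpace ℝ (Fin d) → EuclideanSpace ℝ (Fin d)) (μ : ℝ)
    (y : EuclideanSpace ℝ (Fin d)) : EuclideanSpace ℝ (Fin d) :=
  metricProj (ψ y) (V y - μ • y) - V y

theorem metricProj_eq_of_isSolution (hC : (ψ xs).Nonempty ∧ IsClosed (ψ xs) ∧ Convex ℝ (ψ xs))
    (hμ : 0 < μ) (hxs : V xs ∈ ψ xs ∧ ∀ z ∈ ψ xs, 0 ≤ ⟪xs, z - V xs⟫) :
    metricProj (ψ xs) (V xs - μ • xs) = V xs := by
  refine metricProj_eq_of_inner_le hC.1 hC.2.1 hC.2.2 hxs.1 fun z hz => ?_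
  rw [sub_sub_cancel_left, inner_neg_left, real_inner_smul_left, neg_nonpos]
  exact mul_nonneg hμ.le (hxs.2 z hz)

theorem norm_metricProj_sub_le_of_isSolution
    (hC : (ψ xs).Nonempty ∧ IsClosed (ψ xs) ∧ Convex ℝ (ψ xs)) (hμ : 0 < μ)
    (hproj : ∀ y r s, ‖metricProj (ψ r) y - metricProj (ψ s) y‖ ≤ ρ * ‖r - s‖)
    (hxs : V xs ∈ ψ xs ∧ ∀ z ∈ ψ xs, 0 ≤ ⟪xs, z - V xs⟫) (y : EuclideanSpace ℝ (Fin d)) :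
    ‖metricProj (ψ y) (V y - μ • y) - V xs‖ ≤
      ρ * ‖y - xs‖ + ‖(V y - μ • y) - (V xs - μ • xs)‖ := by
  calc ‖metricProj (ψ y) (V y - μ • y) - V xs‖
      ≤ ‖metricProj (ψ y) (V y - μ • y) - metricProj (ψ xs) (V y - μ • y)‖
        + ‖metricProj (ψ xs) (V y - μ • y) - V xs‖ := norm_sub_le_norm_sub_add_norm_sub _ _ _
    _ ≤ ρ * ‖y - xs‖ + ‖(V y - μ • y) - (V xs - μ • xs)‖ := by
      refine add_le_add (hproj _ _ _) ?_
      have h := norm_metricProj_sub_metricProj_le hC.1 hC.2.1 hC.2.2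
        (V y - μ • y) (V xs - μ • xs)
      rwa [metricProj_eq_of_isSolution hC hμ hxs] at h

theorem inner_projResidual_le (hC : (ψ xs).Nonempty ∧ IsClosed (ψ xs) ∧ Convex ℝ (ψ xs))
    (hL : ∀ y z, ‖V y - V z‖ ≤ L * ‖y - z‖)
    (hη : ∀ y z, η * ‖y - z‖ ^ 2 ≤ ⟪V y - V z, y - z⟫) (hμ : 0 < μ)
    (hproj : ∀ y r s, ‖metricProj (ψ r) y - metricProj (ψ s) y‖ ≤ ρ * ‖r - s‖)
    (hxs : V xs ∈ ψ xs ∧ ∀ z ∈ ψ xs, 0 ≤ ⟪xs, z - V xs⟫) (y : EuclideanSpace ℝ (Fin d)) :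
    ⟪projResidual ψ V μ y, y - xs⟫ ≤
      -(η - ρ - 1/2 - L^2/2 - μ^2/2 + μ*η) * ‖y - xs‖ ^ 2 := by
  have hsplit : ⟪projResidual ψ V μ y, y - xs⟫ =
      ⟪metricProj (ψ y) (V y - μ • y) - V xs, y - xs⟫ - ⟪V y - V xs, y - xs⟫ := by
    rw [projResidual, ← inner_sub_left, sub_sub_sub_cancel_right]
  have hcs := real_inner_le_norm (metricProj (ψ y) (V y - μ • y) - V xs) (y - xs)
  have hP := mul_le_mul_of_nonneg_right (norm_metricProj_sub_le_of_isSolution hC hμ hproj hxs y)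
    (norm_nonneg (y - xs))
  rw [hsplit]
  -- `w h ≤ (w² + h²) / 2` with `w² ≤ (L² - 2ημ + μ²) h²` produces exactly the constant `θ`
  nlinarith [hη y xs, norm_sub_smul_sub_sq_le hL hη hμ.le y xs,
    sq_nonneg (‖(V y - μ • y) - (V xs - μ • xs)‖ - ‖y - xs‖)]

theorem norm_projResidual_le (hC : (ψ xs).Nonempty ∧ IsClosed (ψ xs) ∧ Convex ℝ (ψ xs))
    (hL : ∀ y z, ‖V y - V z‖ ≤ L * ‖y - z‖)
    (hη : ∀ y z, η * ‖y - z‖ ^ 2 ≤ ⟪V y - V z, y - z⟫) (hμ : 0 < μ)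
    (hK : L ^ 2 - 2 * η * μ + μ ^ 2 ≤ μ ^ 2)
    (hproj : ∀ y r s, ‖metricProj (ψ r) y - metricProj (ψ s) y‖ ≤ ρ * ‖r - s‖)
    (hxs : V xs ∈ ψ xs ∧ ∀ z ∈ ψ xs, 0 ≤ ⟪xs, z - V xs⟫) (y : EuclideanSpace ℝ (Fin d)) :
    ‖projResidual ψ V μ y‖ ≤ (L + ρ + μ) * ‖y - xs‖ := by
  have hw : ‖(V y - μ • y) - (V xs - μ • xs)‖ ≤ μ * ‖y - xs‖ := by
    refine le_of_sq_le_sq ?_ (by positivity)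
    nlinarith [norm_sub_smul_sub_sq_le hL hη hμ.le y xs, sq_nonneg ‖y - xs‖]
  calc ‖projResidual ψ V μ y‖
      ≤ ‖metricProj (ψ y) (V y - μ • y) - V xs‖ + ‖V xs - V y‖ :=
        norm_sub_le_norm_sub_add_norm_sub _ _ _
    _ ≤ ρ * ‖y - xs‖ + μ * ‖y - xs‖ + L * ‖y - xs‖ := by
        grw [norm_metricProj_sub_le_of_isSolution hC hμ hproj hxs y, hw, norm_sub_rev, hL]
    _ = (L + ρ + μ) * ‖y - xs‖ := by ring

end Residual

theorem le_mul_pow_of_le_mul_add_pow {u : ℕ → ℝ} {α r c : ℝ} (hα : 0 ≤ α) (hαr : α ≤ r)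
    (hu0 : 0 ≤ u 0) (hc : 0 ≤ c) (hu : ∀ n, u (n + 1) ≤ α * u n + c * r ^ (n + 1)) (n : ℕ) :
    u n ≤ (u 0 + c * n) * r ^ n := by
  induction n with
  | zero => simp
  | succ n ih =>
    have hbound : 0 ≤ (u 0 + c * n) * r ^ n := by
      have := hα.trans hαr
      positivity
    calc u (n + 1) ≤ α * ((u 0 + c * n) * r ^ n) + c * r ^ (n + 1) :=
          (hu n).trans (by gcongr)
      _ ≤ r * ((u 0 + c * n) * r ^ n) + c * r ^ (n + 1) := by gcongr
      _ = (u 0 + c * ↑(n + 1)) * r ^ (n + 1) := by push_cast; ring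

theorem two_mul_mul_le_of_mul_sq_mul_le {σ τ θ B : ℝ} (hσ0 : 0 < σ) (hσ1 : σ < 1) (hθ : 0 < θ)
    (hθB : θ ≤ B) (hτB : τ * B ^ 2 * (4 - σ) ≤ θ * σ ^ 2) :
    2 * (τ * θ) ≤ σ := by
  have h : τ * θ * (4 - σ) * B ^ 2 ≤ σ ^ 2 * B ^ 2 := by
    nlinarith [mul_le_mul_of_nonneg_left hτB hθ.le, mul_self_le_mul_self hθ.le hθB]
  nlinarith [le_of_mul_le_mul_right h (by nlinarith)]

section Lyapunov

variable {H : Type*} [NormedAddCommGroup H]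

def lyapunov (σ : ℝ) (a D : H) : ℝ :=
  σ * ‖a‖ ^ 2 - σ * (1 - σ) * ‖a - D‖ ^ 2 + 4 * (1 - σ) * ‖D‖ ^ 2

theorem lyapunov_step_le [InnerProductSpace ℝ H] {σ τ θ B : ℝ} (hσ0 : 0 < σ) (hσ1 : σ < 1)
    (hτ0 : 0 < τ) (hθ : 0 < θ) (hτB : τ * B ^ 2 * (4 - σ) ≤ θ * σ ^ 2)
    (hτθ : 2 * (τ * θ) ≤ σ) {a D g : H}
    (hm : ⟪g, a⟫ ≤ -θ * ‖a‖ ^ 2) (hl : ‖g‖ ≤ B * ‖a‖) :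
    lyapunov σ (a + ((1 - σ) • D + τ • g)) ((1 - σ) • D + τ • g) ≤
      (1 - τ * θ) * lyapunov σ a D := by
  have hσ1' : 0 ≤ 1 - σ := by linarith
  have h43 : 0 ≤ 4 - 3 * σ := by linarith
  have hτB' : (4 - 3 * σ) * (τ * B ^ 2) ≤ θ * σ ^ 2 := by
    nlinarith [mul_nonneg (mul_nonneg hτ0.le (sq_nonneg B)) hσ0.le]
  have hnext : ‖a + ((1 - σ) • D + τ • g)‖ ^ 2
      = ‖a‖ ^ 2 + 2 * ((1 - σ) * ⟪a, D⟫ + τ * ⟪a, g⟫) + ‖(1 - σ) • D + τ • g‖ ^ 2 := by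
    rw [norm_add_sq_real, inner_add_right, real_inner_smul_right, real_inner_smul_right]
  have hstep : ‖(1 - σ) • D + τ • g‖ ^ 2
      = (1 - σ) ^ 2 * ‖D‖ ^ 2 + 2 * ((1 - σ) * (τ * ⟪D, g⟫)) + τ ^ 2 * ‖g‖ ^ 2 := by
    rw [norm_add_sq_real, real_inner_smul_left, real_inner_smul_right, norm_smul, norm_smul,
      Real.norm_of_nonneg hτ0.le, Real.norm_of_nonneg hσ1']
    ring
  have hprev : ‖a - D‖ ^ 2 = ‖a‖ ^ 2 - 2 * ⟪a, D⟫ + ‖D‖ ^ 2 := norm_sub_sq_real a D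
  suffices σ * lyapunov σ (a + ((1 - σ) • D + τ • g)) ((1 - σ) • D + τ • g) ≤
      σ * ((1 - τ * θ) * lyapunov σ a D) from le_of_mul_le_mul_left this hσ0
  simp only [lyapunov, add_sub_cancel_right]
  rw [hnext, hstep, hprev]
  have hm' : ⟪a, g⟫ ≤ -θ * ‖a‖ ^ 2 := by rwa [real_inner_comm]
  have hg2 : ‖g‖ ^ 2 ≤ B ^ 2 * ‖a‖ ^ 2 := by nlinarith [norm_nonneg g, norm_nonneg a]
  have hprev0 : 0 ≤ ‖a‖ ^ 2 - 2 * ⟪a, D⟫ + ‖D‖ ^ 2 := hprev ▸ sq_nonneg _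
  have s1 : 0 ≤ σ ^ 2 * (1 - σ) * (τ * θ) * (‖a‖ ^ 2 - 2 * ⟪a, D⟫ + ‖D‖ ^ 2) := by positivity
  have s2 : 2 * σ ^ 2 * τ * ⟪a, g⟫ ≤ 2 * σ ^ 2 * τ * (-θ * ‖a‖ ^ 2) :=
    mul_le_mul_of_nonneg_left hm' (by positivity)
  have s3 : 2 * σ * (1 - σ) * τ * (4 - 3 * σ) * ⟪D, g⟫ ≤
      2 * σ * (1 - σ) * τ * (4 - 3 * σ) * (‖D‖ * ‖g‖) :=
    mul_le_mul_of_nonneg_left (real_inner_le_norm D g) (by positivity)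
  -- Young's inequality absorbs the cross term `⟪D, g⟫`
  have s4 : 0 ≤ (1 - σ) * (4 - 3 * σ) * (σ * ‖D‖ - τ * ‖g‖) ^ 2 := by positivity
  have s5 : (4 - 3 * σ) * τ ^ 2 * ‖g‖ ^ 2 ≤ (4 - 3 * σ) * τ ^ 2 * (B ^ 2 * ‖a‖ ^ 2) :=
    mul_le_mul_of_nonneg_left hg2 (by positivity)
  have s6 : (4 - 3 * σ) * (τ * B ^ 2) * (τ * ‖a‖ ^ 2) ≤ (θ * σ ^ 2) * (τ * ‖a‖ ^ 2) :=
    mul_le_mul_of_nonneg_right hτB' (by positivity)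
  have s7 : 0 ≤ σ * (1 - σ) * (2 * σ - 4 * (τ * θ)) * ‖D‖ ^ 2 := by
    have : 0 ≤ 2 * σ - 4 * (τ * θ) := by linarith
    positivity
  linarith

theorem exists_norm_sq_le_of_lyapunov_le {σ q : ℝ} (hσ0 : 0 < σ) (hσ1 : σ < 1) (hq0 : 0 ≤ q)
    (hq1 : q < 1) {x : ℕ → H} {xs : H}
    (hstep : ∀ n, 1 ≤ n → lyapunov σ (x (n + 1) - xs) (x (n + 1) - x n) ≤
      q * lyapunov σ (x n - xs) (x n - x (n - 1))) :
    ∃ ε M : ℝ, 1 < ε ∧ 0 < M ∧ ∀ n : ℕ, ‖x n - xs‖ ^ 2 ≤ M * (n + 1) * ε⁻¹ ^ n := by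
  set E : ℕ → ℝ := fun n => lyapunov σ (x (n + 1) - xs) (x (n + 1) - x n)
  set r := max (1 - σ) q
  have hr0 : 0 < r := lt_max_of_lt_left (by linarith)
  have hr1 : r < 1 := max_lt (by linarith) hq1
  set c := max (E 0) 0 / (σ * r) with hcdef
  have hc : 0 ≤ c := by positivity
  have hE (n : ℕ) : E n ≤ q ^ n * E 0 :=
    le_geom hq0 n fun k _ => by simpa [E] using hstep (k + 1) (Nat.le_add_left 1 k)
  have hrec (n : ℕ) : ‖x (n + 1) - xs‖ ^ 2 ≤ (1 - σ) * ‖x n - xs‖ ^ 2 + c * r ^ (n + 1) := by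
    have hqE : q ^ n * E 0 ≤ σ * (c * r ^ (n + 1)) := by
      have hσcr : σ * (c * r ^ (n + 1)) = r ^ n * max (E 0) 0 := by
        rw [hcdef, pow_succ]
        field_simp
      calc q ^ n * E 0 ≤ q ^ n * max (E 0) 0 := by gcongr; exact le_max_left _ _
        _ ≤ r ^ n * max (E 0) 0 := by gcongr; exact le_max_right _ _
        _ = σ * (c * r ^ (n + 1)) := hσcr.symm
    have hD : 0 ≤ 4 * (1 - σ) * ‖x (n + 1) - x n‖ ^ 2 := by
      have : 0 ≤ 1 - σ := by linarith
      positivity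
    have hE' := (hE n).trans hqE
    simp only [E, lyapunov, sub_sub_sub_cancel_left] at hE'
    refine le_of_mul_le_mul_left ?_ hσ0
    linarith
  refine ⟨r⁻¹, ‖x 0 - xs‖ ^ 2 + c + 1, (one_lt_inv₀ hr0).mpr hr1, by positivity, fun n => ?_⟩
  rw [inv_inv]
  calc ‖x n - xs‖ ^ 2 ≤ (‖x 0 - xs‖ ^ 2 + c * n) * r ^ n :=
        le_mul_pow_of_le_mul_add_pow (u := fun n => ‖x n - xs‖ ^ 2) (by linarith) (le_max_left _ _)
          (sq_nonneg _) hc hrec n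
    _ ≤ (‖x 0 - xs‖ ^ 2 + c + 1) * (n + 1) * r ^ n := by
        gcongr
        nlinarith [sq_nonneg ‖x 0 - xs‖, (Nat.cast_nonneg n : (0 : ℝ) ≤ n)]

end Lyapunov

/-- Linear convergence of the inertial projection algorithm
`x_{n+1} = x_n + (1 − σ)(x_n − x_{n−1}) + τ (P_{ψ(x_n)}(V(x_n) − μ x_n) − V(x_n))`
to the unique solution `x*` of the IQVIP: there are `ε > 1` and `M > 0` with
`‖x_n − x*‖² ≤ M (n+1) ε^{−n}` for all `n ≥ 1`. -/
theorem stmt_13 {d : ℕ} (ψ : EuclideanSpace ℝ (Fin d) → Set (EuclideanSpace ℝ (Fin d)))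
    (V : EuclideanSpace ℝ (Fin d) → EuclideanSpace ℝ (Fin d)) (L η μ ρ θ θ₁ σ τ : ℝ)
    (hΓ₁ : ∀ x, (ψ x).Nonempty ∧ IsClosed (ψ x) ∧ Convex ℝ (ψ x))
    (hL : ∀ y z, ‖V y - V z‖ ≤ L * ‖y - z‖)
    (hη : ∀ y z, η * ‖y - z‖ ^ 2 ≤ ⟪V y - V z, y - z⟫)
    (hμ : 0 < μ) (hρ : 0 < ρ)
    (hproj : ∀ y r s, ‖metricProj (ψ r) y - metricProj (ψ s) y‖ ≤ ρ * ‖r - s‖)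
    (hθ : θ = η - ρ - 1/2 - L^2/2 - μ^2/2 + μ*η) (hθpos : 0 < θ)
    (hcond : Real.sqrt (L^2 - 2*η*μ + μ^2) + ρ < μ)
    (hθ₁ : θ₁ = θ / (2*L + ρ + μ)^2)
    (hσ0 : 0 < σ) (hσ1 : σ < 1)
    (hτ0 : 0 < τ) (hτ : τ < θ₁ * min ((1 - σ)/4) (σ^2/(4 - σ)))
    (x : ℕ → EuclideanSpace ℝ (Fin d))
    (hiter : ∀ n : ℕ, 1 ≤ n →
      x (n+1) = x n + (1 - σ) • (x n - x (n-1)) +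
        τ • (metricProj (ψ (x n)) (V (x n) - μ • x n) - V (x n)))
    (xs : EuclideanSpace ℝ (Fin d))
    (hxs : V xs ∈ ψ xs ∧ ∀ z ∈ ψ xs, 0 ≤ ⟪xs, z - V xs⟫) :
    ∃ ε M : ℝ, 1 < ε ∧ 0 < M ∧
      ∀ n : ℕ, 1 ≤ n → ‖x n - xs‖ ^ 2 ≤ M * (n + 1) * ε⁻¹ ^ n := by
  rcases subsingleton_or_nontrivial (EuclideanSpace ℝ (Fin d)) with _ | _
  · exact ⟨2, 1, one_lt_two, one_pos, fun n _ => by simp [Subsingleton.elim (x n) xs]; positivity⟩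
  obtain ⟨hL0, hηL⟩ := nonneg_and_le_of_lipschitz_of_stronglyMonotone hL hη
  have hK : L ^ 2 - 2 * η * μ + μ ^ 2 ≤ μ ^ 2 := ((Real.sqrt_lt' hμ).mp (by linarith)).le
  set B := 2 * L + ρ + μ with hB
  have hθB : θ ≤ B := by
    rcases le_total η 0 with h | h
    · nlinarith
    · nlinarith [mul_le_mul hηL hηL h hL0, sq_nonneg (η - μ)]
  have hτB : τ * B ^ 2 * (4 - σ) ≤ θ * σ ^ 2 := by
    have h := hτ.trans_le (mul_le_mul_of_nonneg_left (min_le_right _ _) (by rw [hθ₁]; positivity))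
    rw [hθ₁, div_mul_div_comm, lt_div_iff₀ (by nlinarith)] at h
    linarith
  have hτθ := two_mul_mul_le_of_mul_sq_mul_le hσ0 hσ1 hθpos hθB hτB
  obtain ⟨ε, M, hε, hM, hbound⟩ := exists_norm_sq_le_of_lyapunov_le (q := 1 - τ * θ) hσ0 hσ1
    (by linarith) (by nlinarith) (x := x) (xs := xs) fun n hn => by
      have hnext : x (n + 1) - x n =
          (1 - σ) • (x n - x (n - 1)) + τ • projResidual ψ V μ (x n) := by
        rw [hiter n hn, projResidual]; abel
      rw [← sub_add_sub_cancel (x (n + 1)) (x n) xs, add_comm, hnext]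
      refine lyapunov_step_le hσ0 hσ1 hτ0 hθpos hτB hτθ ?_ ?_
      · rw [hθ]; exact inner_projResidual_le (hΓ₁ xs) hL hη hμ hproj hxs (x n)
      · exact (norm_projResidual_le (hΓ₁ xs) hL hη hμ hK hproj hxs (x n)).trans
          (mul_le_mul_of_nonneg_right (by linarith) (norm_nonneg _))
  exact ⟨ε, M, hε, hM, fun n _ => hbound n⟩
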